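/- Let X, Y be real normed spaces, A : X → Y continuous linear, C ⊆ X and D ⊆ Y nonempty closed convex sets, f : X → ℝ ∪ {+∞} proper lower semicontinuous convex with C ∩ A⁻¹(D) ∩ dom f ≠ ∅. Let K := epi σ_C + {(A*λ, σ_D(λ)) : λ ∈ Y*, σ_D(λ) < ∞}. Then the equivalence [ (∀ x ∈ C ∩ A⁻¹(D), f(x) ≥ 0) ⟺ (∃ u', v' ∈ X*, λ ∈ Y* with u' + v' = −A*λ and f*(u') + σ_C(v') + σ_D(λ) ≤ 0) ] holds if and only if epi f* + K is weak-* closed regarding {(0, 0)} in X* × ℝ. -/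

import Mathlib

open Pointwise

/-- The strong dual element viewed in the weak-* dual. -/
def toWeakDual {X : Type*} [NormedAddCommGroup X] [NormedSpace ℝ X]
    (f : X →L[ℝ] ℝ) : WeakDual ℝ X := f

/-!
Write `M = epi f* + K`. Unfolding the sum, `(0, 0) ∈ M` is exactly the dual condition, and
`(0, 0) ∈ cl M` is exactly the primal condition `f ≥ 0` on `C ∩ A⁻¹(D)`; as `M ⊆ cl M`, the
equivalence of the two conditions amounts to `(0, 0) ∈ M ∨ (0, 0) ∉ cl M`.

For the closure, each feasible `x` gives `p.1 x - p.2 ≤ f x` on `M`, a weak-* closed condition.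
Conversely, if `(0, 0) ∉ cl M`, Hahn–Banach in the locally convex space `X* × ℝ` separates it by
a functional `(x*, r) ↦ x* z' + c r`. Since `M` is upward closed and lies above a non-vertical
affine function (from a feasible point), the functional can be tilted to have `c > 0`, so some
`z` has `p.1 z - p.2 ≤ m < 0` on all of `M`. Pairing with the three summands of `M` shows, via
the bipolar theorem for `C` and `D` and Fenchel–Moreau for `f`, that `z` is feasible with
`f z ≤ m < 0`.
-/

open Set

theorem nonpos_of_forall_nonneg_mul_le {a b : ℝ} (h : ∀ τ : ℝ, 0 ≤ τ → τ * a ≤ b) : a ≤ 0 := by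
  by_contra! ha
  have := h ((|b| + 1) / a) (by positivity)
  rw [div_mul_cancel₀ _ ha.ne'] at this
  linarith [le_abs_self b]

section Separation

variable {E : Type*} [AddCommGroup E] [Module ℝ E] [TopologicalSpace E]

theorem ContinuousLinearMap.apply_prod_real (φ : E × ℝ →L[ℝ] ℝ) (x : E) (r : ℝ) :
    φ (x, r) = φ (x, 0) + r * φ (0, 1) := by
  rw [← smul_eq_mul, ← map_smul, ← map_add]
  simp

theorem exists_affine_of_separating {W : Set (E × ℝ)} {p₀ : E × ℝ} (φ : E × ℝ →L[ℝ] ℝ) {u : ℝ}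
    (hc : 0 < φ (0, 1)) (hp₀ : φ p₀ < u) (hW : ∀ p ∈ W, u < φ p) :
    ∃ (g : E →L[ℝ] ℝ) (β : ℝ), p₀.2 < g p₀.1 + β ∧ ∀ p ∈ W, g p.1 + β < p.2 := by
  set c := φ (0, 1)
  let g : E →L[ℝ] ℝ := -c⁻¹ • φ.comp (ContinuousLinearMap.inl ℝ E ℝ)
  have hg : ∀ p : E × ℝ, g p.1 + u / c - p.2 = (u - φ p) / c := fun p => by
    rw [φ.apply_prod_real p.1 p.2]
    simp only [smul_apply, ContinuousLinearMap.comp_apply, ContinuousLinearMap.inl_apply,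
      smul_eq_mul, neg_mul, g]
    field_simp
    ring
  refine ⟨g, u / c, ?_, fun p hp => ?_⟩
  · linarith [hg p₀, div_pos (sub_pos.2 hp₀) hc]
  · linarith [hg p, div_neg_of_neg_of_pos (sub_neg.2 (hW p hp)) hc]

variable [IsTopologicalAddGroup E] [ContinuousSMul ℝ E] [LocallyConvexSpace ℝ E]

theorem Convex.mem_of_forall_dual_le {s : Set E} (hs : Convex ℝ s) (hcl : IsClosed s) {z : E}
    (h : ∀ (l : StrongDual ℝ E) (c : ℝ), (∀ y ∈ s, l y ≤ c) → l z ≤ c) : z ∈ s := by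
  by_contra hz
  obtain ⟨l, c, hl, hlz⟩ := geometric_hahn_banach_closed_point hs hcl hz
  exact (h l c fun y hy => (hl y hy).le).not_gt hlz

theorem exists_affine_separation {W : Set (E × ℝ)} (hW : Convex ℝ W)
    (hup : ∀ p ∈ W, ∀ s, p.2 ≤ s → (p.1, s) ∈ W)
    {g₀ : E →L[ℝ] ℝ} {β₀ : ℝ} (hg₀ : ∀ p ∈ W, g₀ p.1 + β₀ ≤ p.2)
    {p₀ : E × ℝ} (hp₀ : p₀ ∉ closure W) :
    ∃ (g : E →L[ℝ] ℝ) (β : ℝ), p₀.2 < g p₀.1 + β ∧ ∀ p ∈ W, g p.1 + β < p.2 := by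
  rcases W.eq_empty_or_nonempty with rfl | ⟨⟨x, r⟩, hw⟩
  · exact ⟨0, p₀.2 + 1, by simp, by simp⟩
  obtain ⟨φ, u, hφp₀, hφW⟩ := geometric_hahn_banach_point_closed hW.closure isClosed_closure hp₀
  have hφW' : ∀ p ∈ W, u < φ p := fun p hp => hφW p (subset_closure hp)
  have hc : 0 ≤ φ (0, 1) := by
    have := nonpos_of_forall_nonneg_mul_le (a := -φ (0, 1)) (b := φ (x, 0) + r * φ (0, 1) - u)
      fun τ hτ => by
        have := hφW' _ (hup _ hw (r + τ) (by simp [hτ]))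
        rw [φ.apply_prod_real] at this
        linarith
    linarith
  obtain ⟨t, ht, hpt⟩ := exists_pos_mul_lt (sub_pos.2 hφp₀) (p₀.2 - g₀ p₀.1 - β₀)
  -- tilt `φ` towards the affine minorant to make it non-vertical
  let ψ : E × ℝ →L[ℝ] ℝ :=
    φ + t • (ContinuousLinearMap.snd ℝ E ℝ - g₀.comp (ContinuousLinearMap.fst ℝ E ℝ))
  have hψ : ∀ p, ψ p = φ p + t * (p.2 - g₀ p.1) := fun p => by simp [ψ]
  refine exists_affine_of_separating ψ (u := u + t * β₀) ?_ ?_ fun p hp => ?_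
  · rw [hψ]
    simp only [map_zero]
    linarith
  · rw [hψ]
    linarith
  · rw [hψ]
    linarith [mul_le_mul_of_nonneg_left (hg₀ p hp) ht.le, hφW' p hp]

variable {S : Set E} {f : E → ℝ}

theorem ConvexOn.exists_affine_minorant (hf : ConvexOn ℝ S f)
    (hcl : IsClosed {p : E × ℝ | p.1 ∈ S ∧ f p.1 ≤ p.2}) (hS : S.Nonempty) :
    ∃ (g : E →L[ℝ] ℝ) (r : ℝ), ∀ x ∈ S, g x - f x ≤ r := by
  obtain ⟨x, hx⟩ := hS
  have hx' : (x, f x - 1) ∉ {p : E × ℝ | p.1 ∈ S ∧ f p.1 ≤ p.2} := fun h => by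
    linarith [h.2]
  obtain ⟨φ, u, hφx, hφW⟩ := geometric_hahn_banach_point_closed hf.convex_epigraph hcl hx'
  have hc : 0 < φ (0, 1) := by
    have := hφW (x, f x) ⟨hx, le_rfl⟩
    rw [φ.apply_prod_real] at this hφx
    linarith
  obtain ⟨g, β, -, hg⟩ := exists_affine_of_separating φ hc hφx hφW
  exact ⟨g, -β, fun y hy => by linarith [hg (y, f y) ⟨hy, le_rfl⟩]⟩

/-- **Fenchel–Moreau**, in the form `f ≤ f**`. -/
theorem ConvexOn.le_of_forall_affine_minorant (hf : ConvexOn ℝ S f)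
    (hcl : IsClosed {p : E × ℝ | p.1 ∈ S ∧ f p.1 ≤ p.2}) (hS : S.Nonempty) {z : E} {m : ℝ}
    (h : ∀ (g : E →L[ℝ] ℝ) (r : ℝ), (∀ x ∈ S, g x - f x ≤ r) → g z - r ≤ m) :
    z ∈ S ∧ f z ≤ m := by
  by_contra hz
  obtain ⟨g₀, r₀, h₀⟩ := hf.exists_affine_minorant hcl hS
  obtain ⟨g, β, hzg, hg⟩ := exists_affine_separation hf.convex_epigraph
    (fun p hp s hs => ⟨hp.1, hp.2.trans hs⟩) (β₀ := -r₀)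
    (fun p hp => by linarith [h₀ p.1 hp.1, hp.2]) (p₀ := (z, m)) (by rwa [hcl.closure_eq])
  linarith [h g (-β) fun x hx => by linarith [hg (x, f x) ⟨hx, le_rfl⟩]]

end Separation

instance WeakDual.instLocallyConvexSpace {X : Type*} [NormedAddCommGroup X] [NormedSpace ℝ X] :
    LocallyConvexSpace ℝ (WeakDual ℝ X) :=
  WeakBilin.locallyConvexSpace

theorem WeakDual.exists_eq_eval {X : Type*} [NormedAddCommGroup X] [NormedSpace ℝ X]
    (g : StrongDual ℝ (WeakDual ℝ X)) : ∃ z : X, ∀ u : WeakDual ℝ X, g u = u z := by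
  obtain ⟨z, rfl⟩ := LinearMap.dualEmbedding_surjective (topDualPairing ℝ X) g
  exact ⟨z, fun _ => rfl⟩

section Farkas

variable {X Y : Type*} [NormedAddCommGroup X] [NormedSpace ℝ X]
  [NormedAddCommGroup Y] [NormedSpace ℝ Y]

@[simp]
theorem toWeakDual_apply (g : X →L[ℝ] ℝ) (x : X) : toWeakDual g x = g x := rfl

/-- `epi f* + epi σ_C + {(A* l, σ_D l) | σ_D l < ∞}`. -/
def farkasDualSet (A : X →L[ℝ] Y) (C : Set X) (D : Set Y) (S : Set X) (f : X → ℝ) :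
    Set (WeakDual ℝ X × ℝ) :=
  {p | ∀ v ∈ S, p.1 v - f v ≤ p.2} + ({p | ∀ x ∈ C, p.1 x ≤ p.2}
    + {p | ∃ l : Y →L[ℝ] ℝ, BddAbove ((fun y => l y) '' D) ∧
      p = (toWeakDual (l.comp A), sSup ((fun y => l y) '' D))})

variable {A : X →L[ℝ] Y} {C : Set X} {D : Set Y} {S : Set X} {f : X → ℝ}

theorem mem_farkasDualSet_iff (hD : D.Nonempty) {p : WeakDual ℝ X × ℝ} :
    p ∈ farkasDualSet A C D S f ↔
      ∃ (u v : X →L[ℝ] ℝ) (l : Y →L[ℝ] ℝ) (r s t : ℝ),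
        (∀ x ∈ S, u x - f x ≤ r) ∧ (∀ x ∈ C, v x ≤ s) ∧ (∀ d ∈ D, l d ≤ t) ∧
        p.1 = toWeakDual (u + v + l.comp A) ∧ r + s + t ≤ p.2 := by
  constructor
  · rintro ⟨a, ha, _, ⟨b, hb, _, ⟨l, hl, rfl⟩, rfl⟩, rfl⟩
    exact ⟨a.1, b.1, l, a.2, b.2, _, ha, hb, fun d hd => le_csSup hl (mem_image_of_mem _ hd),
      (add_assoc _ _ _).symm, (add_assoc _ _ _).le⟩
  · rintro ⟨u, v, l, r, s, t, hu, hv, hl, hp₁, hp₂⟩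
    have hlD : sSup ((fun y => l y) '' D) ≤ t := csSup_le (hD.image _) (forall_mem_image.2 hl)
    refine ⟨(u, p.2 - s - sSup ((fun y => l y) '' D)),
      fun x hx => show u x - f x ≤ _ by linarith [hu x hx], _,
      ⟨(v, s), hv, _, ⟨l, ⟨t, forall_mem_image.2 hl⟩, rfl⟩, rfl⟩, Prod.ext ?_ ?_⟩
    · rw [hp₁]
      exact (add_assoc _ _ _).symm
    · simp

theorem convex_farkasDualSet (hD : D.Nonempty) : Convex ℝ (farkasDualSet A C D S f) := by
  intro p hp q hq α β hα hβ hαβ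
  obtain ⟨u₁, v₁, l₁, r₁, s₁, t₁, hu₁, hv₁, hl₁, hp₁, hp₂⟩ := (mem_farkasDualSet_iff hD).1 hp
  obtain ⟨u₂, v₂, l₂, r₂, s₂, t₂, hu₂, hv₂, hl₂, hq₁, hq₂⟩ := (mem_farkasDualSet_iff hD).1 hq
  refine (mem_farkasDualSet_iff hD).2 ⟨α • u₁ + β • u₂, α • v₁ + β • v₂, α • l₁ + β • l₂,
    α * r₁ + β * r₂, α * s₁ + β * s₂, α * t₁ + β * t₂, fun x hx => ?_, fun x hx => ?_,
    fun d hd => ?_, ?_, ?_⟩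
  · have hfx : α * f x + β * f x = f x := by rw [← add_mul, hαβ, one_mul]
    simp only [add_apply, smul_apply, smul_eq_mul]
    linarith [mul_le_mul_of_nonneg_left (hu₁ x hx) hα, mul_le_mul_of_nonneg_left (hu₂ x hx) hβ]
  · simp only [add_apply, smul_apply, smul_eq_mul]
    linarith [mul_le_mul_of_nonneg_left (hv₁ x hx) hα, mul_le_mul_of_nonneg_left (hv₂ x hx) hβ]
  · simp only [add_apply, smul_apply, smul_eq_mul]
    linarith [mul_le_mul_of_nonneg_left (hl₁ d hd) hα, mul_le_mul_of_nonneg_left (hl₂ d hd) hβ]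
  · rw [Prod.fst_add, Prod.smul_fst, Prod.smul_fst, hp₁, hq₁]
    change toWeakDual (α • (u₁ + v₁ + l₁.comp A) + β • (u₂ + v₂ + l₂.comp A)) = _
    congr 1
    ext x
    simp only [add_apply, smul_apply, smul_eq_mul, ContinuousLinearMap.comp_apply]
    ring
  · simp only [Prod.snd_add, Prod.smul_snd, smul_eq_mul]
    linarith [mul_le_mul_of_nonneg_left hp₂ hα, mul_le_mul_of_nonneg_left hq₂ hβ]

theorem mk_mem_farkasDualSet_of_le (hD : D.Nonempty) {p : WeakDual ℝ X × ℝ}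
    (hp : p ∈ farkasDualSet A C D S f) {s : ℝ} (hs : p.2 ≤ s) :
    (p.1, s) ∈ farkasDualSet A C D S f := by
  obtain ⟨u, v, l, r, s', t, hu, hv, hl, hp₁, hp₂⟩ := (mem_farkasDualSet_iff hD).1 hp
  exact (mem_farkasDualSet_iff hD).2 ⟨u, v, l, r, s', t, hu, hv, hl, hp₁, hp₂.trans hs⟩

theorem apply_sub_le_of_mem_farkasDualSet (hD : D.Nonempty) {x : X}
    (hx : x ∈ C ∩ A ⁻¹' D ∩ S) {p : WeakDual ℝ X × ℝ} (hp : p ∈ farkasDualSet A C D S f) :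
    p.1 x - p.2 ≤ f x := by
  obtain ⟨⟨hxC, hxD⟩, hxS⟩ := hx
  obtain ⟨u, v, l, r, s, t, hu, hv, hl, hp₁, hp₂⟩ := (mem_farkasDualSet_iff hD).1 hp
  have := hu x hxS
  have := hv x hxC
  have := hl _ hxD
  simp only [hp₁, toWeakDual_apply, add_apply, ContinuousLinearMap.comp_apply]
  linarith

theorem mem_farkasDualSet_zero_iff (hD : D.Nonempty) :
    ((0 : WeakDual ℝ X), (0 : ℝ)) ∈ farkasDualSet A C D S f ↔
      ∃ (u v : X →L[ℝ] ℝ) (l : Y →L[ℝ] ℝ) (r s t : ℝ),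
        u + v = -(l.comp A) ∧
        (∀ x ∈ S, u x - f x ≤ r) ∧ (∀ x ∈ C, v x ≤ s) ∧ (∀ d ∈ D, l d ≤ t) ∧
        r + s + t ≤ 0 := by
  rw [mem_farkasDualSet_iff hD]
  constructor
  · rintro ⟨u, v, l, r, s, t, hu, hv, hl, h₁, h₂⟩
    exact ⟨u, v, l, r, s, t, eq_neg_of_add_eq_zero_left h₁.symm, hu, hv, hl, h₂⟩
  · rintro ⟨u, v, l, r, s, t, huv, hu, hv, hl, h₂⟩
    exact ⟨u, v, l, r, s, t, hu, hv, hl, by rw [huv, neg_add_cancel]; rfl, h₂⟩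

theorem mem_of_forall_farkasDualSet_le (hCcl : IsClosed C) (hCconv : Convex ℝ C)
    (hD : D.Nonempty) (hDcl : IsClosed D) (hDconv : Convex ℝ D) (hf : ConvexOn ℝ S f)
    (hlsc : IsClosed {p : X × ℝ | p.1 ∈ S ∧ f p.1 ≤ p.2}) (hS : S.Nonempty) {z : X} {m : ℝ}
    (hz : ∀ p ∈ farkasDualSet A C D S f, p.1 z - p.2 ≤ m) :
    z ∈ C ∩ A ⁻¹' D ∩ S ∧ f z ≤ m := by
  obtain ⟨u₀, r₀, h₀⟩ := hf.exists_affine_minorant hlsc hS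
  have le_of_ray : ∀ (w : X →L[ℝ] ℝ) (s : ℝ), (∀ τ : ℝ, 0 ≤ τ →
      (toWeakDual (u₀ + τ • w), r₀ + τ * s) ∈ farkasDualSet A C D S f) → w z ≤ s := by
    intro w s hw
    have := nonpos_of_forall_nonneg_mul_le (a := w z - s) (b := m - u₀ z + r₀) fun τ hτ => by
      have := hz _ (hw τ hτ)
      simp only [toWeakDual_apply, add_apply, smul_apply, smul_eq_mul] at this
      linarith
    linarith
  have hzf := hf.le_of_forall_affine_minorant hlsc hS fun g r hg => by
    simpa using hz (toWeakDual g, r) ((mem_farkasDualSet_iff hD).2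
      ⟨g, 0, 0, r, 0, 0, hg, by simp, by simp, by simp, by simp⟩)
  refine ⟨⟨⟨?_, ?_⟩, hzf.1⟩, hzf.2⟩
  · refine hCconv.mem_of_forall_dual_le hCcl fun v s hv => le_of_ray v s fun τ hτ =>
      (mem_farkasDualSet_iff hD).2 ⟨u₀, τ • v, 0, r₀, τ * s, 0, h₀, fun x hx => ?_, by simp,
        by simp, by simp⟩
    simpa using mul_le_mul_of_nonneg_left (hv x hx) hτ
  · refine hDconv.mem_of_forall_dual_le hDcl fun l t hl => le_of_ray (l.comp A) t fun τ hτ =>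
      (mem_farkasDualSet_iff hD).2 ⟨u₀, 0, τ • l, r₀, 0, τ * t, h₀, by simp, fun d hd => ?_,
        ?_, by simp⟩
    · simpa using mul_le_mul_of_nonneg_left (hl d hd) hτ
    · simp

theorem zero_mem_closure_farkasDualSet_iff (hCcl : IsClosed C) (hCconv : Convex ℝ C)
    (hD : D.Nonempty) (hDcl : IsClosed D) (hDconv : Convex ℝ D) (hf : ConvexOn ℝ S f)
    (hlsc : IsClosed {p : X × ℝ | p.1 ∈ S ∧ f p.1 ≤ p.2}) (hfeas : (C ∩ A ⁻¹' D ∩ S).Nonempty) :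
    ((0 : WeakDual ℝ X), (0 : ℝ)) ∈ closure (farkasDualSet A C D S f) ↔
      ∀ x ∈ C ∩ A ⁻¹' D ∩ S, 0 ≤ f x := by
  constructor
  · intro h0 x hx
    have hcl : IsClosed {p : WeakDual ℝ X × ℝ | p.1 x - p.2 ≤ f x} :=
      isClosed_le (((WeakDual.eval_continuous x).comp continuous_fst).sub continuous_snd)
        continuous_const
    have : (0 : WeakDual ℝ X) x - 0 ≤ f x :=
      closure_minimal (fun p hp => apply_sub_le_of_mem_farkasDualSet hD hx hp) hcl h0
    linarith [show (0 : WeakDual ℝ X) x = 0 from rfl]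
  · intro hprimal
    by_contra h0
    obtain ⟨xb, hxb⟩ := hfeas
    let evalAt : StrongDual ℝ (WeakDual ℝ X) := WeakBilin.eval (topDualPairing ℝ X) xb
    obtain ⟨g, β, hβ, hg⟩ := exists_affine_separation (E := WeakDual ℝ X)
      (convex_farkasDualSet hD) (fun p hp s hs => mk_mem_farkasDualSet_of_le hD hp hs)
      (g₀ := evalAt) (β₀ := -f xb)
      (fun p hp => by
        have := apply_sub_le_of_mem_farkasDualSet hD hxb hp
        change p.1 xb + -f xb ≤ p.2
        linarith) h0
    obtain ⟨z, hz⟩ := WeakDual.exists_eq_eval g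
    obtain ⟨hzfeas, hfz⟩ := mem_of_forall_farkasDualSet_le hCcl hCconv hD hDcl hDconv hf hlsc
      ⟨xb, hxb.2⟩ (z := z) (m := -β) fun p hp => by linarith [hg p hp, hz p.1]
    simp only [map_zero, zero_add] at hβ
    linarith [hprimal z hzfeas]

end Farkas

/-- The proper lsc convex `f : X → ℝ ∪ {+∞}` is modelled by its effective domain `S` and a
real-valued `f` convex on `S` with closed epigraph; `σ_D l < ∞` is `BddAbove (l '' D)`. -/
theorem farkas_third_characterization_general {X Y : Type*}
    [NormedAddCommGroup X] [NormedSpace ℝ X] [NormedAddCommGroup Y] [NormedSpace ℝ Y]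
    (A : X →L[ℝ] Y) (C : Set X) (D : Set Y)
    (hCcl : IsClosed C) (hCconv : Convex ℝ C)
    (hDne : D.Nonempty) (hDcl : IsClosed D) (hDconv : Convex ℝ D)
    (S : Set X) (f : X → ℝ) (hf : ConvexOn ℝ S f)
    (hlsc : IsClosed {p : X × ℝ | p.1 ∈ S ∧ f p.1 ≤ p.2})
    (hfeas : (C ∩ A ⁻¹' D ∩ S).Nonempty)
    (epif K : Set (WeakDual ℝ X × ℝ))
    (hepif : epif = {p : WeakDual ℝ X × ℝ | ∀ v ∈ S, p.1 v - f v ≤ p.2})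
    (hK : K = {p : WeakDual ℝ X × ℝ | ∀ x ∈ C, p.1 x ≤ p.2}
        + {p : WeakDual ℝ X × ℝ | ∃ l : Y →L[ℝ] ℝ, BddAbove ((fun y => l y) '' D) ∧
            p = (toWeakDual (l.comp A), sSup ((fun y => l y) '' D))}) :
    ((∀ x ∈ C ∩ A ⁻¹' D ∩ S, 0 ≤ f x) ↔
        ∃ (u' v' : X →L[ℝ] ℝ) (l : Y →L[ℝ] ℝ) (r s t : ℝ),
          u' + v' = -(l.comp A) ∧
          (∀ v ∈ S, u' v - f v ≤ r) ∧ (∀ x ∈ C, v' x ≤ s) ∧ (∀ d ∈ D, l d ≤ t) ∧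
          r + s + t ≤ 0) ↔
      (((0 : WeakDual ℝ X), (0 : ℝ)) ∈ epif + K ∨
        ((0 : WeakDual ℝ X), (0 : ℝ)) ∉ closure (epif + K)) := by
  have hM : epif + K = farkasDualSet A C D S f := by rw [hepif, hK]; rfl
  have hdual := mem_farkasDualSet_zero_iff (A := A) (C := C) (S := S) (f := f) hDne
  have hprimal := zero_mem_closure_farkasDualSet_iff hCcl hCconv hDne hDcl hDconv hf hlsc hfeas
  have hsub :=
    subset_closure (s := farkasDualSet A C D S f) (a := ((0 : WeakDual ℝ X), (0 : ℝ)))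
  rw [hM, ← hdual, ← hprimal]
  tauto

/-- Theorem 3 (3rd characterization of Farkas' Lemma).  The proper lsc convex function
`f : X → ℝ ∪ {+∞}` is modelled by its effective domain `S` and a real-valued `f` convex on
`S` with closed epigraph.  With `K := epi σ_C + Λ`, the equivalence
"[(∀ x ∈ C ∩ A⁻¹(D), f(x) ≥ 0) ⟺ (∃ u', v', λ with u' + v' = −A*λ and
f*(u') + σ_C(v') + σ_D(λ) ≤ 0)]" holds iff `epi f* + K` is weak-* closed regarding
`{(0, 0)}` in `X* × ℝ`. -/
theorem farkas_third_characterization {X Y : Type*}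
    [NormedAddCommGroup X] [NormedSpace ℝ X] [NormedAddCommGroup Y] [NormedSpace ℝ Y]
    (A : X →L[ℝ] Y) (C : Set X) (D : Set Y)
    (hCne : C.Nonempty) (hCcl : IsClosed C) (hCconv : Convex ℝ C)
    (hDne : D.Nonempty) (hDcl : IsClosed D) (hDconv : Convex ℝ D)
    (S : Set X) (f : X → ℝ) (hf : ConvexOn ℝ S f)
    (hlsc : IsClosed {p : X × ℝ | p.1 ∈ S ∧ f p.1 ≤ p.2})
    (hfeas : (C ∩ A ⁻¹' D ∩ S).Nonempty)
    (epif K : Set (WeakDual ℝ X × ℝ))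
    (hepif : epif = {p : WeakDual ℝ X × ℝ | ∀ v ∈ S, p.1 v - f v ≤ p.2})
    (hK : K = {p : WeakDual ℝ X × ℝ | ∀ x ∈ C, p.1 x ≤ p.2}
        + {p : WeakDual ℝ X × ℝ | ∃ l : Y →L[ℝ] ℝ, BddAbove ((fun y => l y) '' D) ∧
            p = (toWeakDual (l.comp A), sSup ((fun y => l y) '' D))}) :
    ((∀ x ∈ C ∩ A ⁻¹' D ∩ S, 0 ≤ f x) ↔
        ∃ (u' v' : X →L[ℝ] ℝ) (l : Y →L[ℝ] ℝ) (r s t : ℝ),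
          u' + v' = -(l.comp A) ∧
          (∀ v ∈ S, u' v - f v ≤ r) ∧ (∀ x ∈ C, v' x ≤ s) ∧ (∀ d ∈ D, l d ≤ t) ∧
          r + s + t ≤ 0) ↔
      (((0 : WeakDual ℝ X), (0 : ℝ)) ∈ epif + K ∨
        ((0 : WeakDual ℝ X), (0 : ℝ)) ∉ closure (epif + K)) :=
  farkas_third_characterization_general A C D hCcl hCconv hDne hDcl hDconv S f hf hlsc hfeas epif K
    hepif hK
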